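/- Exponentiated gradient (Hedge) regret bound: let A ≥ 2 experts and bounded loss vectors g^1, …, g^K ∈ R^A. Define x^1 as the uniform distribution on [A] and x^{k+1}_a ∝ x^k_a exp(-α g^k_a) for α > 0. Then for every distribution x ∈ Δ([A]), Σ_{k=1}^K ⟨g^k, x^k - x⟩ ≤ (log A)/α + (α/2) Σ_{k=1}^K ||g^k||_∞². -/

import Mathlib

open Real Finset

lemma hoeffding_discrete {A : ℕ} (p t : Fin A → ℝ) (hp : ∀ a, 0 ≤ p a)
    (hsum : ∑ a, p a = 1) (c : ℝ) (ht : ∀ a, |t a| ≤ c) :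
    Real.log (∑ a, p a * Real.exp (t a)) ≤ (∑ a, p a * t a) + c ^ 2 / 2 := by
  have hex : ∃ a, 0 < p a := by
    by_contra h
    push_neg at h
    have : ∑ a, p a = 0 := Finset.sum_eq_zero fun a _ => le_antisymm (h a) (hp a)
    rw [this] at hsum; norm_num at hsum
  obtain ⟨a0, ha0⟩ := hex
  have hc : 0 ≤ c := (abs_nonneg _).trans (ht a0)
  set Z : ℝ → ℝ := fun s => ∑ a, p a * Real.exp (s * t a) with hZdef
  set Z1 : ℝ → ℝ := fun s => ∑ a, p a * (Real.exp (s * t a) * t a) with hZ1def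
  set Z2 : ℝ → ℝ := fun s => ∑ a, p a * (Real.exp (s * t a) * t a * t a) with hZ2def
  have hterm : ∀ (s : ℝ) (a : Fin A),
      HasDerivAt (fun s => p a * Real.exp (s * t a)) (p a * (Real.exp (s * t a) * t a)) s := by
    intro s a
    exact ((hasDerivAt_mul_const (t a)).exp).const_mul (p a)
  have hterm1 : ∀ (s : ℝ) (a : Fin A),
      HasDerivAt (fun s => p a * (Real.exp (s * t a) * t a))
        (p a * (Real.exp (s * t a) * t a * t a)) s := by
    intro s a
    exact (((hasDerivAt_mul_const (t a)).exp).mul_const (t a)).const_mul (p a)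
  have hZ : ∀ s, HasDerivAt Z (Z1 s) s := fun s =>
    HasDerivAt.fun_sum fun a _ => hterm s a
  have hZ1 : ∀ s, HasDerivAt Z1 (Z2 s) s := fun s =>
    HasDerivAt.fun_sum fun a _ => hterm1 s a
  have hZpos : ∀ s, 0 < Z s := by
    intro s
    refine Finset.sum_pos' (fun a _ => mul_nonneg (hp a) (Real.exp_pos _).le)
      ⟨a0, Finset.mem_univ a0, mul_pos ha0 (Real.exp_pos _)⟩
  have hZ0 : Z 0 = 1 := by simp [hZdef, hsum]
  set μ : ℝ := ∑ a, p a * t a with hμdef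
  have hZ10 : Z1 0 = μ := by simp [hZ1def, hμdef]
  have hD : ∀ s, (Z2 s * Z s - Z1 s * Z1 s) / (Z s) ^ 2 ≤ c ^ 2 := by
    intro s
    have h2 : Z2 s ≤ c ^ 2 * Z s := by
      rw [hZ2def, hZdef, Finset.mul_sum]
      refine Finset.sum_le_sum fun a _ => ?_
      have ht2 : t a ^ 2 ≤ c ^ 2 := by
        have := ht a; nlinarith [abs_nonneg (t a), sq_abs (t a)]
      nlinarith [Real.exp_pos (s * t a), hp a, mul_nonneg (hp a) (Real.exp_pos (s * t a)).le]
    rw [div_le_iff₀ (pow_pos (hZpos s) 2)]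
    nlinarith [sq_nonneg (Z1 s), hZpos s]
  -- φ s = f'(s) - μ - c² s  is ≤ 0 for s ≥ 0
  set φ : ℝ → ℝ := fun s => Z1 s / Z s - (μ + c ^ 2 * s) with hφdef
  have hφd : ∀ s, HasDerivAt φ ((Z2 s * Z s - Z1 s * Z1 s) / (Z s) ^ 2 - c ^ 2) s := by
    intro s
    have h1 : HasDerivAt (fun s => Z1 s / Z s)
        ((Z2 s * Z s - Z1 s * Z1 s) / (Z s) ^ 2) s :=
      (hZ1 s).div (hZ s) (hZpos s).ne'
    have h2 : HasDerivAt (fun s : ℝ => μ + c ^ 2 * s) (c ^ 2) s := by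
      simpa using ((hasDerivAt_id s).const_mul (c ^ 2)).const_add μ
    exact h1.sub h2
  have hφanti : Antitone φ := by
    apply antitone_of_deriv_nonpos
    · exact fun s => (hφd s).differentiableAt
    · intro s
      rw [(hφd s).deriv]
      linarith [hD s]
  have hφ0 : φ 0 = 0 := by simp [hφdef, hZ0, hZ10]
  have hφle : ∀ s, 0 ≤ s → φ s ≤ 0 := fun s hs => hφ0 ▸ hφanti hs
  set ψ : ℝ → ℝ := fun s => Real.log (Z s) - (μ * s + c ^ 2 * (s * s) / 2) with hψdef
  have hψd : ∀ s, HasDerivAt ψ (φ s) s := by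
    intro s
    have h1 : HasDerivAt (fun s => Real.log (Z s)) (Z1 s / Z s) s :=
      (hZ s).log (hZpos s).ne'
    have h2 : HasDerivAt (fun s : ℝ => μ * s + c ^ 2 * (s * s) / 2)
        (μ + c ^ 2 * s) s := by
      have ha : HasDerivAt (fun s : ℝ => μ * s) μ s := by
        simpa using (hasDerivAt_id s).const_mul μ
      have hb : HasDerivAt (fun s : ℝ => c ^ 2 * (s * s) / 2)
          (c ^ 2 * (1 * s + s * 1) / 2) s :=
        (((hasDerivAt_id s).mul (hasDerivAt_id s)).const_mul (c ^ 2)).div_const 2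
      have := ha.add hb
      exact this.congr_deriv (by ring)
    exact h1.sub h2
  have hanti : AntitoneOn ψ (Set.Ici 0) := by
    apply antitoneOn_of_deriv_nonpos (convex_Ici 0)
    · exact fun s _ => (hψd s).differentiableAt.continuousAt.continuousWithinAt
    · exact fun s _ => (hψd s).differentiableAt.differentiableWithinAt
    · intro s hs
      rw [(hψd s).deriv]
      exact hφle s (le_of_lt (by simpa using hs))
  have h01 : ψ 1 ≤ ψ 0 := hanti (Set.mem_Ici.mpr le_rfl) (Set.mem_Ici.mpr zero_le_one) zero_le_one
  have hψ0 : ψ 0 = 0 := by simp [hψdef, hZ0]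
  have hZ1v : Z 1 = ∑ a, p a * Real.exp (t a) := by simp [hZdef]
  have h1 : Real.log (Z 1) - (μ * 1 + c ^ 2 * (1 * 1) / 2) ≤ 0 := by
    rw [hψ0] at h01; exact h01
  rw [hZ1v] at h1
  linarith

theorem stmt_10 (A : ℕ) (hA : 2 ≤ A) (K : ℕ) (α : ℝ) (hα : 0 < α)
    (g : ℕ → Fin A → ℝ) (x : ℕ → Fin A → ℝ)
    (hx1 : ∀ a, x 1 a = 1 / A)
    (hrec : ∀ k a, x (k + 1) a =
      x k a * Real.exp (-α * g k a) / ∑ b, x k b * Real.exp (-α * g k b)) :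
    ∀ xs : Fin A → ℝ, (∀ a, 0 ≤ xs a) → (∑ a, xs a = 1) →
      ∑ k ∈ Finset.Icc 1 K, ∑ a, g k a * (x k a - xs a) ≤
        Real.log A / α + (α / 2) * ∑ k ∈ Finset.Icc 1 K, (⨆ a, |g k a|) ^ 2 := by
  intro xs hxs0 hxs1
  have hA0 : (0 : ℝ) < A := by exact_mod_cast (by omega : 0 < A)
  haveI : Nonempty (Fin A) := ⟨⟨0, by omega⟩⟩
  -- x k is a positive probability vector for all k ≥ 1
  have hx : ∀ k, 1 ≤ k → (∀ a, 0 < x k a) ∧ (∑ a, x k a = 1) := by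
    intro k hk
    induction k with
    | zero => omega
    | succ n ih =>
      rcases Nat.lt_or_ge n 1 with hn | hn
      · -- n = 0, so k = 1
        interval_cases n
        constructor
        · intro a; rw [hx1 a]; positivity
        · have : ∀ a : Fin A, x 1 a = (1 : ℝ) / A := hx1
          rw [Finset.sum_congr rfl fun a _ => hx1 a]
          rw [Finset.sum_const, Finset.card_univ, Fintype.card_fin, nsmul_eq_mul]
          field_simp
      · obtain ⟨hpos, hsum⟩ := ih hn
        have hZ : 0 < ∑ b, x n b * Real.exp (-α * g n b) :=
          Finset.sum_pos (fun b _ => mul_pos (hpos b) (Real.exp_pos _)) Finset.univ_nonempty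
        constructor
        · intro a
          rw [hrec n a]
          exact div_pos (mul_pos (hpos a) (Real.exp_pos _)) hZ
        · rw [Finset.sum_congr rfl fun a _ => hrec n a, ← Finset.sum_div]
          exact div_self hZ.ne'
  set Φ : ℕ → ℝ := fun k => -∑ a, xs a * Real.log (x k a) with hΦdef
  clear_value Φ
  -- per-step inequality
  have key : ∀ k, 1 ≤ k →
      α * (∑ a, g k a * (x k a - xs a)) ≤
        Φ k - Φ (k + 1) + α ^ 2 * (⨆ a, |g k a|) ^ 2 / 2 := by
    intro k hk
    obtain ⟨hpos, hsum⟩ := hx k hk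
    set M : ℝ := ⨆ a, |g k a| with hMdef
    have hMle : ∀ a, |g k a| ≤ M := fun a =>
      le_ciSup (f := fun a => |g k a|) (Set.Finite.bddAbove (Set.finite_range _)) a
    set Z : ℝ := ∑ b, x k b * Real.exp (-α * g k b) with hZsumdef
    have hZ : 0 < Z :=
      Finset.sum_pos (fun b _ => mul_pos (hpos b) (Real.exp_pos _)) Finset.univ_nonempty
    -- Hoeffding
    have hhoef := hoeffding_discrete (x k) (fun a => -α * g k a) (fun a => (hpos a).le)
      hsum (α * M) (by
        intro a
        rw [abs_mul, abs_neg, abs_of_pos hα]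
        exact mul_le_mul_of_nonneg_left (hMle a) hα.le)
    have hlog : Real.log Z ≤ (∑ a, x k a * (-α * g k a)) + (α * M) ^ 2 / 2 := hhoef
    -- log of x(k+1)
    have hlogx : ∀ a, Real.log (x (k + 1) a) =
        Real.log (x k a) + (-α * g k a) - Real.log Z := by
      intro a
      rw [hrec k a, ← hZsumdef, Real.log_div (mul_pos (hpos a) (Real.exp_pos _)).ne' hZ.ne',
        Real.log_mul (hpos a).ne' (Real.exp_ne_zero _), Real.log_exp]
    have hΦstep : Φ (k + 1) = Φ k + α * (∑ a, xs a * g k a) + Real.log Z := by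
      rw [hΦdef]
      simp only
      rw [Finset.sum_congr rfl fun a _ => by rw [hlogx a]]
      have : ∑ a, xs a * (Real.log (x k a) + -α * g k a - Real.log Z) =
          (∑ a, xs a * Real.log (x k a)) + (-α) * (∑ a, xs a * g k a)
            - Real.log Z * (∑ a, xs a) := by
        rw [Finset.sum_congr rfl fun (a : Fin A) _ => (by ring :
            xs a * (Real.log (x k a) + -α * g k a - Real.log Z) =
            xs a * Real.log (x k a) + (-α) * (xs a * g k a) - Real.log Z * xs a),
          Finset.sum_sub_distrib, Finset.sum_add_distrib, ← Finset.mul_sum, ← Finset.mul_sum]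
      rw [this, hxs1]
      ring
    have e1 : ∑ a, x k a * (-α * g k a) = -α * ∑ a, x k a * g k a := by
      rw [Finset.mul_sum]
      exact Finset.sum_congr rfl fun a _ => by ring
    have e2 : ∑ a, g k a * (x k a - xs a) =
        (∑ a, x k a * g k a) - ∑ a, xs a * g k a := by
      rw [← Finset.sum_sub_distrib]
      exact Finset.sum_congr rfl fun a _ => by ring
    rw [e1] at hlog
    rw [e2]
    have : (α * M) ^ 2 = α ^ 2 * M ^ 2 := by ring
    nlinarith [hlog, hΦstep]
  -- sum over Icc 1 K
  have hsumkey : α * ∑ k ∈ Finset.Icc 1 K, ∑ a, g k a * (x k a - xs a) ≤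
      Φ 1 - Φ (K + 1) + ∑ k ∈ Finset.Icc 1 K, α ^ 2 * (⨆ a, |g k a|) ^ 2 / 2 := by
    rw [Finset.mul_sum]
    have htel : ∑ k ∈ Finset.Icc 1 K, (Φ k - Φ (k + 1)) = Φ 1 - Φ (K + 1) := by
      induction K with
      | zero => simp
      | succ n ihn =>
        rw [Finset.sum_Icc_succ_top (by omega : 1 ≤ n + 1), ihn]
        ring
    calc ∑ k ∈ Finset.Icc 1 K, α * ∑ a, g k a * (x k a - xs a)
        ≤ ∑ k ∈ Finset.Icc 1 K, (Φ k - Φ (k + 1) + α ^ 2 * (⨆ a, |g k a|) ^ 2 / 2) := by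
          refine Finset.sum_le_sum fun k hk => key k ?_
          exact (Finset.mem_Icc.mp hk).1
      _ = Φ 1 - Φ (K + 1) + ∑ k ∈ Finset.Icc 1 K, α ^ 2 * (⨆ a, |g k a|) ^ 2 / 2 := by
          rw [Finset.sum_add_distrib, htel]
  have hΦ1 : Φ 1 = Real.log A := by
    rw [hΦdef]
    simp only
    rw [Finset.sum_congr rfl fun a _ => by rw [hx1 a]]
    rw [← Finset.sum_mul, hxs1, one_mul, one_div, Real.log_inv]
    ring
  have hΦK : 0 ≤ Φ (K + 1) := by
    obtain ⟨hpos, hsum⟩ := hx (K + 1) (by omega)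
    rw [hΦdef]
    simp only [neg_nonneg]
    refine Finset.sum_nonpos fun a _ => mul_nonpos_of_nonneg_of_nonpos (hxs0 a) ?_
    refine Real.log_nonpos (hpos a).le ?_
    calc x (K + 1) a ≤ ∑ b, x (K + 1) b :=
          Finset.single_le_sum (fun b _ => (hpos b).le) (Finset.mem_univ a)
      _ = 1 := hsum
  have hT : ∑ k ∈ Finset.Icc 1 K, α ^ 2 * (⨆ a, |g k a|) ^ 2 / 2 =
      (α ^ 2 / 2) * ∑ k ∈ Finset.Icc 1 K, (⨆ a, |g k a|) ^ 2 := by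
    rw [Finset.mul_sum]
    exact Finset.sum_congr rfl fun k _ => by ring
  rw [hT, hΦ1] at hsumkey
  rw [← mul_le_mul_iff_right₀ hα]
  have h2 : α * (Real.log A / α + (α / 2) * ∑ k ∈ Finset.Icc 1 K, (⨆ a, |g k a|) ^ 2)
      = Real.log A + (α ^ 2 / 2) * ∑ k ∈ Finset.Icc 1 K, (⨆ a, |g k a|) ^ 2 := by
    field_simp
  rw [h2]
  linarith
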